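/- arXiv:2308.11510 — 4 statements merged into one kernel-verified Lean document; each statement's English description precedes it below -/
import Mathlib

section
/- Let Z be a real-valued random variable with distribution P, bounded (supported on a compact set), and β ∈ (0,1). Then the function t ↦ t + β⁻¹ E_P[max(Z − t, 0)] attains its infimum over t ∈ ℝ, i.e., CVaR_β^P[Z] = min over t ∈ ℝ of { t + β⁻¹ E_P[(Z − t)_+] }. -/
open MeasureTheory

/-- For a bounded random variable, the infimum defining CVaR is attained. -/
theorem stmt_2 {Ω : Type*} [MeasurableSpace Ω] (μ : Measure Ω) [IsProbabilityMeasure μ]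
    (Z : Ω → ℝ) (hZm : Measurable Z) (C : ℝ) (hZb : ∀ᵐ ω ∂μ, |Z ω| ≤ C)
    (β : ℝ) (hβ : β ∈ Set.Ioo (0 : ℝ) 1) :
    ∃ t₀ : ℝ, t₀ + β⁻¹ * ∫ ω, max (Z ω - t₀) 0 ∂μ
      = sInf {y : ℝ | ∃ t : ℝ, y = t + β⁻¹ * ∫ ω, max (Z ω - t) 0 ∂μ} := by
  obtain ⟨hβ0, hβ1⟩ := hβ
  have hβinv : 1 ≤ β⁻¹ := one_le_inv₀ hβ0 |>.mpr hβ1.le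
  -- C ≥ 0
  have hC : 0 ≤ C := by
    by_contra h
    have : ∀ᵐ ω ∂μ, False := hZb.mono fun ω hω => by
      have := abs_nonneg (Z ω); linarith
    have h1 : μ = 0 := by simpa using this
    exact (IsProbabilityMeasure.ne_zero μ) h1
  set g : ℝ → ℝ := fun t => ∫ ω, max (Z ω - t) 0 ∂μ with hgdef
  set f : ℝ → ℝ := fun t => t + β⁻¹ * g t with hfdef
  have hint : ∀ t : ℝ, Integrable (fun ω => max (Z ω - t) 0) μ := by
    intro t
    refine (integrable_const (C + |t|)).mono'
      ((hZm.sub measurable_const).max measurable_const).aestronglyMeasurable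
      (hZb.mono fun ω hω => ?_)
    rw [Real.norm_eq_abs, abs_of_nonneg (le_max_right _ _)]
    have habs := abs_le.mp hω
    have hnt := neg_abs_le t
    have : Z ω - t ≤ C + |t| := by linarith [habs.2]
    exact max_le this (by positivity)
  have hZint : Integrable Z μ :=
    (integrable_const C).mono' hZm.aestronglyMeasurable (hZb.mono fun ω hω => by
      simpa [Real.norm_eq_abs] using hω)
  -- g is 1-Lipschitz
  have hglip : LipschitzWith 1 g := by
    refine LipschitzWith.of_dist_le_mul fun s t => ?_
    simp only [Real.dist_eq, NNReal.coe_one, one_mul]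
    have h1 : g s - g t = ∫ ω, (max (Z ω - s) 0 - max (Z ω - t) 0) ∂μ := by
      rw [integral_sub (hint s) (hint t)]
    rw [h1]
    calc |∫ ω, (max (Z ω - s) 0 - max (Z ω - t) 0) ∂μ|
        ≤ ∫ ω, |max (Z ω - s) 0 - max (Z ω - t) 0| ∂μ := by
          simpa [Real.norm_eq_abs] using
            norm_integral_le_integral_norm (fun ω => max (Z ω - s) 0 - max (Z ω - t) 0)
      _ ≤ ∫ _ : Ω, |s - t| ∂μ := by
          refine integral_mono ((hint s).sub (hint t)).abs (integrable_const _) fun ω => ?_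
          calc |max (Z ω - s) 0 - max (Z ω - t) 0| ≤ |(Z ω - s) - (Z ω - t)| :=
                abs_max_sub_max_le_abs _ _ _
            _ = |s - t| := by rw [show (Z ω - s) - (Z ω - t) = -(s - t) by ring, abs_neg]
      _ = |s - t| := by simp
  have hf : Continuous f :=
    continuous_id.add (continuous_const.mul hglip.continuous)
  -- minimum on [-C, C]
  obtain ⟨t₀, ht₀mem, ht₀min⟩ :=
    isCompact_Icc.exists_isMinOn (Set.nonempty_Icc.mpr (by linarith : -C ≤ C))
    hf.continuousOn
  -- g t = 0 for t ≥ C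
  have hg0 : ∀ t : ℝ, C ≤ t → g t = 0 := by
    intro t ht
    refine integral_eq_zero_of_ae (hZb.mono fun ω hω => ?_)
    have : Z ω - t ≤ 0 := by have := (abs_le.mp hω).2; linarith
    simp [max_eq_right this]
  -- g t = ∫Z - t for t ≤ -C
  have hgl : ∀ t : ℝ, t ≤ -C → g t = (∫ ω, Z ω ∂μ) - t := by
    intro t ht
    have h1 : g t = ∫ ω, (Z ω - t) ∂μ := by
      refine integral_congr_ae (hZb.mono fun ω hω => ?_)
      have : 0 ≤ Z ω - t := by have := (abs_le.mp hω).1; linarith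
      simp [max_eq_left this]
    rw [h1, integral_sub hZint (integrable_const t)]
    simp
  -- f t₀ is a global min
  have hlow : ∀ t : ℝ, f t₀ ≤ f t := by
    intro t
    rcases le_or_gt t (-C) with h | h
    · have h1 : f t = β⁻¹ * (∫ ω, Z ω ∂μ) + (1 - β⁻¹) * t := by
        simp only [hfdef, hgl t h]; ring
      have h2 : f (-C) = β⁻¹ * (∫ ω, Z ω ∂μ) + (1 - β⁻¹) * (-C) := by
        simp only [hfdef, hgl (-C) le_rfl]; ring
      have h3 : f t₀ ≤ f (-C) := ht₀min (Set.left_mem_Icc.mpr (by linarith))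
      have h4 : f (-C) ≤ f t := by
        rw [h1, h2]
        nlinarith [mul_nonneg (by linarith : (0:ℝ) ≤ β⁻¹ - 1) (by linarith : 0 ≤ -C - t)]
      linarith
    rcases le_or_gt C t with h' | h'
    · have h1 : f t = t := by simp [hfdef, hg0 t h']
      have h2 : f C = C := by simp [hfdef, hg0 C le_rfl]
      have h3 : f t₀ ≤ f C := ht₀min (Set.right_mem_Icc.mpr (by linarith))
      rw [h1]; rw [h2] at h3; linarith
    · exact ht₀min ⟨h.le, h'.le⟩
  refine ⟨t₀, ?_⟩
  have hmem : (t₀ + β⁻¹ * ∫ ω, max (Z ω - t₀) 0 ∂μ)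
      ∈ {y : ℝ | ∃ t : ℝ, y = t + β⁻¹ * ∫ ω, max (Z ω - t) 0 ∂μ} := ⟨t₀, rfl⟩
  have hlb : ∀ y ∈ {y : ℝ | ∃ t : ℝ, y = t + β⁻¹ * ∫ ω, max (Z ω - t) 0 ∂μ},
      (t₀ + β⁻¹ * ∫ ω, max (Z ω - t₀) 0 ∂μ) ≤ y := by
    rintro y ⟨t, rfl⟩
    exact hlow t
  exact le_antisymm (le_csInf ⟨_, hmem⟩ hlb) (csInf_le ⟨_, hlb⟩ hmem)
end

section
/- Let W = {w₁,…,w_L} be finite, β ∈ (0,1), g : W → ℝ, P̂ = (p̂_ℓ) ∈ Δ_L, θ ≥ 0, and D_{ℓ1} = { μ ∈ Δ_L : (1/2)‖μ − P̂‖₁ ≤ θ }. Then sup_{μ ∈ D_{ℓ1}} CVaR_β^μ[g(w)] equals the infimum over (λ ≥ 0, η ∈ ℝ, ν ∈ ℝ, γ₁, γ₂ ∈ ℝ^L_{≥0}) of 2λθ + η + ν + Σ_ℓ (γ₁ℓ − γ₂ℓ) p̂_ℓ subject to β(γ₁ℓ − γ₂ℓ + ν) ≥ (g(w_ℓ) −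 η)_+ and γ₁ℓ + γ₂ℓ = λ for all ℓ ∈ {1,…,L}. -/
/-!
Weak duality: for `μ` in the ball and a dual feasible point, `|γ₁ - γ₂| ≤ λ` gives
`∑ μ (γ₁ - γ₂) ≤ ∑ p̂ (γ₁ - γ₂) + 2λθ`, which bounds the CVaR objective at `η`.

Conversely, a single distribution in the ball is worst for every `η` at once: move the mass
`t = min θ 1` from the atoms where `g` is smallest (a lower `t`-quantile of `g` under `p̂`) to an
atom where `g` is largest. Because `(g - η)_+` is monotone in `g`, for each `η` an explicit dual
point attains the CVaR objective of this distribution at `η`, so the dual infimum is at most its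
CVaR.
-/

open Finset

namespace TVRobustCVaR

variable {ι : Type*}

/-- `r` is the part of the weights `p` lying lowest in the order of `g`: all of `p` strictly
below the level `x`, none of it strictly above. -/
structure IsLowerTrim (g p r : ι → ℝ) (x : ℝ) : Prop where
  nonneg : ∀ ℓ, 0 ≤ r ℓ
  le : ∀ ℓ, r ℓ ≤ p ℓ
  eq_of_lt : ∀ ℓ, g ℓ < x → r ℓ = p ℓ
  eq_zero_of_gt : ∀ ℓ, x < g ℓ → r ℓ = 0

theorem IsLowerTrim.comp_monotone {g p r : ι → ℝ} {x : ℝ} (h : IsLowerTrim g p r x)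
    {φ : ℝ → ℝ} (hφ : Monotone φ) : IsLowerTrim (φ ∘ g) p r (φ x) where
  nonneg := h.nonneg
  le := h.le
  eq_of_lt ℓ hℓ := h.eq_of_lt ℓ (lt_of_not_ge fun hx => hℓ.not_ge (hφ hx))
  eq_zero_of_gt ℓ hℓ := h.eq_zero_of_gt ℓ (lt_of_not_ge fun hx => hℓ.not_ge (hφ hx))

theorem IsLowerTrim.mul_max_eq {c p r : ι → ℝ} {a : ℝ} (h : IsLowerTrim c p r a) (ℓ : ι) :
    p ℓ * max (c ℓ) a = p ℓ * c ℓ + r ℓ * (a - c ℓ) := by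
  rcases lt_trichotomy (c ℓ) a with hlt | heq | hgt
  · rw [max_eq_right hlt.le, h.eq_of_lt ℓ hlt]; ring
  · rw [heq, max_self]; ring
  · rw [max_eq_left hgt.le, h.eq_zero_of_gt ℓ hgt]; ring

variable [Fintype ι]

noncomputable def cvarObjective (β : ℝ) (μ g : ι → ℝ) (η : ℝ) : ℝ :=
  η + β⁻¹ * ∑ ℓ, μ ℓ * max (g ℓ - η) 0

noncomputable def cvar (β : ℝ) (μ g : ι → ℝ) : ℝ :=
  sInf {y | ∃ η, y = cvarObjective β μ g η}

def primalValues (β θ : ℝ) (g p : ι → ℝ) : Set ℝ :=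
  {v | ∃ μ : ι → ℝ, (∀ ℓ, 0 ≤ μ ℓ) ∧ ∑ ℓ, μ ℓ = 1 ∧ 1 / 2 * ∑ ℓ, |μ ℓ - p ℓ| ≤ θ ∧
    v = cvar β μ g}

def dualValues (β θ : ℝ) (g p : ι → ℝ) : Set ℝ :=
  {v | ∃ (lam η ν : ℝ) (γ₁ γ₂ : ι → ℝ),
    0 ≤ lam ∧ (∀ ℓ, 0 ≤ γ₁ ℓ) ∧ (∀ ℓ, 0 ≤ γ₂ ℓ) ∧
    (∀ ℓ, max (g ℓ - η) 0 ≤ β * (γ₁ ℓ - γ₂ ℓ + ν)) ∧ (∀ ℓ, γ₁ ℓ + γ₂ ℓ = lam) ∧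
    v = 2 * lam * θ + η + ν + ∑ ℓ, (γ₁ ℓ - γ₂ ℓ) * p ℓ}

theorem sum_mul_le_cvarObjective {β : ℝ} (hβ0 : 0 < β) (hβ1 : β ≤ 1) {μ : ι → ℝ}
    (hμ0 : ∀ ℓ, 0 ≤ μ ℓ) (hμ1 : ∑ ℓ, μ ℓ = 1) (g : ι → ℝ) (η : ℝ) :
    ∑ ℓ, μ ℓ * g ℓ ≤ cvarObjective β μ g η := by
  have hexcess : ∑ ℓ, μ ℓ * g ℓ - η ≤ ∑ ℓ, μ ℓ * max (g ℓ - η) 0 :=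
    calc ∑ ℓ, μ ℓ * g ℓ - η = ∑ ℓ, μ ℓ * (g ℓ - η) := by
          simp only [mul_sub, sum_sub_distrib, ← sum_mul, hμ1, one_mul]
      _ ≤ _ := sum_le_sum fun ℓ _ => mul_le_mul_of_nonneg_left (le_max_left _ _) (hμ0 ℓ)
  have hnonneg : 0 ≤ ∑ ℓ, μ ℓ * max (g ℓ - η) 0 :=
    sum_nonneg fun ℓ _ => mul_nonneg (hμ0 ℓ) (le_max_right _ _)
  have hβinv : 1 ≤ β⁻¹ := (one_le_inv₀ hβ0).2 hβ1
  rw [cvarObjective]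
  nlinarith

theorem cvar_le_cvarObjective {β : ℝ} (hβ0 : 0 < β) (hβ1 : β ≤ 1) {μ : ι → ℝ}
    (hμ0 : ∀ ℓ, 0 ≤ μ ℓ) (hμ1 : ∑ ℓ, μ ℓ = 1) (g : ι → ℝ) (η : ℝ) :
    cvar β μ g ≤ cvarObjective β μ g η :=
  csInf_le ⟨_, by rintro _ ⟨η', rfl⟩; exact sum_mul_le_cvarObjective hβ0 hβ1 hμ0 hμ1 g η'⟩
    ⟨η, rfl⟩

theorem sum_mul_le_sum_mul_add_mul_sum_abs_sub {μ p δ : ι → ℝ} {lam : ℝ}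
    (hδ : ∀ ℓ, |δ ℓ| ≤ lam) :
    ∑ ℓ, μ ℓ * δ ℓ ≤ ∑ ℓ, δ ℓ * p ℓ + lam * ∑ ℓ, |μ ℓ - p ℓ| := by
  rw [mul_sum, ← sum_add_distrib]
  refine sum_le_sum fun ℓ _ => ?_
  calc μ ℓ * δ ℓ = δ ℓ * p ℓ + (μ ℓ - p ℓ) * δ ℓ := by ring
    _ ≤ δ ℓ * p ℓ + |μ ℓ - p ℓ| * |δ ℓ| := by rw [← abs_mul]; gcongr; exact le_abs_self _
    _ ≤ δ ℓ * p ℓ + lam * |μ ℓ - p ℓ| := by rw [mul_comm lam]; gcongr; exact hδ ℓ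

theorem cvarObjective_le_of_feasible {β θ lam η ν : ℝ} (hβ : 0 < β) {g p μ γ₁ γ₂ : ι → ℝ}
    (hμ0 : ∀ ℓ, 0 ≤ μ ℓ) (hμ1 : ∑ ℓ, μ ℓ = 1) (hμθ : 1 / 2 * ∑ ℓ, |μ ℓ - p ℓ| ≤ θ)
    (hlam : 0 ≤ lam) (hγ₁ : ∀ ℓ, 0 ≤ γ₁ ℓ) (hγ₂ : ∀ ℓ, 0 ≤ γ₂ ℓ)
    (hfeas : ∀ ℓ, max (g ℓ - η) 0 ≤ β * (γ₁ ℓ - γ₂ ℓ + ν)) (hγ : ∀ ℓ, γ₁ ℓ + γ₂ ℓ = lam) :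
    cvarObjective β μ g η ≤ 2 * lam * θ + η + ν + ∑ ℓ, (γ₁ ℓ - γ₂ ℓ) * p ℓ := by
  have hδ : ∀ ℓ, |γ₁ ℓ - γ₂ ℓ| ≤ lam := fun ℓ =>
    abs_le.2 ⟨by linarith [hγ₁ ℓ, hγ ℓ], by linarith [hγ₂ ℓ, hγ ℓ]⟩
  have hexcess : β⁻¹ * ∑ ℓ, μ ℓ * max (g ℓ - η) 0 ≤ ∑ ℓ, μ ℓ * (γ₁ ℓ - γ₂ ℓ) + ν := by
    rw [inv_mul_le_iff₀ hβ]
    calc ∑ ℓ, μ ℓ * max (g ℓ - η) 0 ≤ ∑ ℓ, μ ℓ * (β * (γ₁ ℓ - γ₂ ℓ + ν)) :=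
          sum_le_sum fun ℓ _ => mul_le_mul_of_nonneg_left (hfeas ℓ) (hμ0 ℓ)
      _ = β * (∑ ℓ, μ ℓ * (γ₁ ℓ - γ₂ ℓ) + ν * ∑ ℓ, μ ℓ) := by
          simp only [mul_add, mul_sum, ← sum_add_distrib]
          exact sum_congr rfl fun ℓ _ => by ring
      _ = β * (∑ ℓ, μ ℓ * (γ₁ ℓ - γ₂ ℓ) + ν) := by rw [hμ1, mul_one]
  have hshift := sum_mul_le_sum_mul_add_mul_sum_abs_sub (μ := μ) (p := p) hδ
  have hball : lam * ∑ ℓ, |μ ℓ - p ℓ| ≤ lam * (2 * θ) :=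
    mul_le_mul_of_nonneg_left (by linarith) hlam
  rw [cvarObjective]
  linarith

theorem le_of_mem_primalValues_of_mem_dualValues {β θ : ℝ} (hβ0 : 0 < β) (hβ1 : β ≤ 1)
    {g p : ι → ℝ} {v w : ℝ} (hv : v ∈ primalValues β θ g p) (hw : w ∈ dualValues β θ g p) :
    v ≤ w := by
  obtain ⟨μ, hμ0, hμ1, hμθ, rfl⟩ := hv
  obtain ⟨lam, η, ν, γ₁, γ₂, hlam, hγ₁, hγ₂, hfeas, hγ, rfl⟩ := hw
  exact (cvar_le_cvarObjective hβ0 hβ1 hμ0 hμ1 g η).trans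
    (cvarObjective_le_of_feasible hβ0 hμ0 hμ1 hμθ hlam hγ₁ hγ₂ hfeas hγ)

theorem mem_dualValues {β θ η a M : ℝ} (hβ : 0 < β) {g p : ι → ℝ} (hp1 : ∑ ℓ, p ℓ = 1)
    (haM : a ≤ M) (hM : ∀ ℓ, max (g ℓ - η) 0 ≤ M) :
    η + β⁻¹ * ((M - a) * θ + ∑ ℓ, p ℓ * max (max (g ℓ - η) 0) a) ∈ dualValues β θ g p := by
  set c := fun ℓ => max (max (g ℓ - η) 0) a
  have hβinv : 0 ≤ β⁻¹ := inv_nonneg.2 hβ.le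
  refine ⟨β⁻¹ * ((M - a) / 2), η, β⁻¹ * ((M + a) / 2), fun ℓ => β⁻¹ * ((c ℓ - a) / 2),
    fun ℓ => β⁻¹ * ((M - c ℓ) / 2), ?_, fun ℓ => ?_, fun ℓ => ?_, fun ℓ => ?_, fun ℓ => ?_, ?_⟩
  · exact mul_nonneg hβinv (by linarith)
  · exact mul_nonneg hβinv (by linarith [le_max_right (max (g ℓ - η) 0) a])
  · exact mul_nonneg hβinv (by linarith [max_le (hM ℓ) haM])
  · rw [← mul_sub, ← mul_add, mul_inv_cancel_left₀ hβ.ne']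
    linarith [le_max_left (max (g ℓ - η) 0) a]
  · ring
  · have hsum : ∑ ℓ, (β⁻¹ * ((c ℓ - a) / 2) - β⁻¹ * ((M - c ℓ) / 2)) * p ℓ
        = β⁻¹ * ∑ ℓ, p ℓ * c ℓ - β⁻¹ * ((M + a) / 2) * ∑ ℓ, p ℓ := by
      rw [mul_sum, mul_sum, ← sum_sub_distrib]
      exact sum_congr rfl fun ℓ _ => by ring
    rw [hsum, hp1]
    ring

noncomputable def shiftMass [DecidableEq ι] (p r : ι → ℝ) (top : ι) : ι → ℝ :=
  p - r + (Pi.single top (∑ ℓ, r ℓ) : ι → ℝ)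

theorem IsLowerTrim.sum_shiftMass_mul_eq [DecidableEq ι] {c p r : ι → ℝ} {a θ : ℝ}
    (h : IsLowerTrim c p r a) (top : ι) (hθ : (c top - a) * (θ - ∑ ℓ, r ℓ) = 0) :
    ∑ ℓ, shiftMass p r top ℓ * c ℓ = (c top - a) * θ + ∑ ℓ, p ℓ * max (c ℓ) a := by
  have hmax : ∑ ℓ, p ℓ * max (c ℓ) a = ∑ ℓ, p ℓ * c ℓ + (∑ ℓ, r ℓ) * a - ∑ ℓ, r ℓ * c ℓ := by
    simp only [h.mul_max_eq, sum_add_distrib, mul_sub, sum_sub_distrib, ← sum_mul]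
    ring
  have htop : ∑ ℓ, (Pi.single top (∑ ℓ, r ℓ) : ι → ℝ) ℓ * c ℓ = (∑ ℓ, r ℓ) * c top := by
    rw [Fintype.sum_eq_single top fun ℓ hℓ => by simp [hℓ], Pi.single_eq_same]
  simp only [shiftMass, Pi.add_apply, Pi.sub_apply, add_mul, sub_mul, sum_add_distrib,
    sum_sub_distrib, htop, hmax]
  linear_combination -hθ

theorem exists_quantile [Nonempty ι] (g p : ι → ℝ) {t : ℝ}
    (ht0 : 0 ≤ t) (ht : t ≤ ∑ ℓ, p ℓ) :
    ∃ j, ∑ ℓ with g ℓ < g j, p ℓ ≤ t ∧ t ≤ ∑ ℓ with g ℓ ≤ g j, p ℓ := by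
  classical
  obtain ⟨jmax, -, hjmax⟩ := exists_max_image univ g univ_nonempty
  have hne : ({j | t ≤ ∑ ℓ with g ℓ ≤ g j, p ℓ} : Finset ι).Nonempty :=
    ⟨jmax, by simpa [filter_true_of_mem fun ℓ _ => hjmax ℓ (mem_univ ℓ)] using ht⟩
  obtain ⟨j, hj, hjmin⟩ := exists_min_image _ g hne
  refine ⟨j, ?_, (mem_filter.1 hj).2⟩
  by_contra! hlt
  have hbelow : ({ℓ | g ℓ < g j} : Finset ι).Nonempty := by
    by_contra! hempty
    rw [hempty, sum_empty] at hlt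
    linarith
  obtain ⟨j', hj', hj'max⟩ := exists_max_image _ g hbelow
  have hj'j : g j' < g j := (mem_filter.1 hj').2
  -- no value of `g` lies strictly between `g j'` and `g j`
  have hlevel : univ.filter (fun ℓ => g ℓ ≤ g j') = univ.filter fun ℓ => g ℓ < g j := by
    ext ℓ
    simp only [mem_filter, mem_univ, true_and]
    exact ⟨fun h => h.trans_lt hj'j, fun h => hj'max ℓ (mem_filter.2 ⟨mem_univ ℓ, h⟩)⟩
  have := hjmin j' (mem_filter.2 ⟨mem_univ j', by rw [hlevel]; exact hlt.le⟩)
  linarith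

theorem exists_isLowerTrim [Nonempty ι] (g : ι → ℝ) {p : ι → ℝ} (hp : ∀ ℓ, 0 ≤ p ℓ) {t : ℝ}
    (ht0 : 0 ≤ t) (ht : t ≤ ∑ ℓ, p ℓ) :
    ∃ j r, IsLowerTrim g p r (g j) ∧ ∑ ℓ, r ℓ = t := by
  classical
  obtain ⟨j, hlow, hhigh⟩ := exists_quantile g p ht0 ht
  set F := ∑ ℓ with g ℓ < g j, p ℓ
  set G := ∑ ℓ with g ℓ ≤ g j, p ℓ
  set s := (t - F) / (G - F)
  have hs0 : 0 ≤ s := div_nonneg (by linarith) (by linarith)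
  have hs1 : s ≤ 1 := div_le_one_of_le₀ (by linarith) (by linarith)
  have hinterp : (1 - s) * F + s * G = t := by
    rcases eq_or_ne G F with h | h
    · rw [h]; linarith
    · linear_combination div_mul_cancel₀ (t - F) (sub_ne_zero.2 h)
  -- interpolate between the weights strictly below and weakly below the level `g j`
  refine ⟨j, fun ℓ => (1 - s) * (if g ℓ < g j then p ℓ else 0) +
    s * (if g ℓ ≤ g j then p ℓ else 0), ⟨fun ℓ => ?_, fun ℓ => ?_, fun ℓ hℓ => ?_,
    fun ℓ hℓ => ?_⟩, ?_⟩
  · split_ifs <;> nlinarith [hp ℓ]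
  · split_ifs <;> nlinarith [hp ℓ]
  · simp only [if_pos hℓ, if_pos hℓ.le]; ring
  · simp only [if_neg (not_lt.2 hℓ.le), if_neg (not_le.2 hℓ)]; ring
  · rw [sum_add_distrib, ← mul_sum, ← mul_sum, ← sum_filter, ← sum_filter, hinterp]

theorem shiftMass_mem_ball [DecidableEq ι] {p r : ι → ℝ} {θ : ℝ} (hp1 : ∑ ℓ, p ℓ = 1)
    (hr0 : ∀ ℓ, 0 ≤ r ℓ) (hrp : ∀ ℓ, r ℓ ≤ p ℓ) (hrθ : ∑ ℓ, r ℓ ≤ θ) (top : ι) :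
    (∀ ℓ, 0 ≤ shiftMass p r top ℓ) ∧ ∑ ℓ, shiftMass p r top ℓ = 1 ∧
      1 / 2 * ∑ ℓ, |shiftMass p r top ℓ - p ℓ| ≤ θ := by
  unfold shiftMass
  set t := ∑ ℓ, r ℓ
  have hsingle0 : ∀ ℓ, 0 ≤ (Pi.single top t : ι → ℝ) ℓ := fun ℓ => by
    rcases eq_or_ne ℓ top with rfl | hℓ
    · simpa using sum_nonneg fun ℓ _ => hr0 ℓ
    · simp [hℓ]
  have hsingle : ∑ ℓ, (Pi.single top t : ι → ℝ) ℓ = t := by simp [sum_pi_single']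
  refine ⟨fun ℓ => ?_, ?_, ?_⟩
  · simp only [Pi.add_apply, Pi.sub_apply]; linarith [hrp ℓ, hsingle0 ℓ]
  · simp only [Pi.add_apply, Pi.sub_apply, sum_add_distrib, sum_sub_distrib, hp1,
      hsingle]
    ring
  · have hmoved : ∑ ℓ, |(p - r + (Pi.single top t : ι → ℝ)) ℓ - p ℓ|
        ≤ ∑ ℓ, (r ℓ + (Pi.single top t : ι → ℝ) ℓ) :=
      sum_le_sum fun ℓ _ => by
        simp only [Pi.add_apply, Pi.sub_apply]
        exact abs_le.2 ⟨by linarith [hsingle0 ℓ], by linarith [hr0 ℓ]⟩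
    rw [sum_add_distrib, hsingle] at hmoved
    linarith

theorem exists_forall_cvarObjective_mem_dualValues {β θ : ℝ} (hβ : 0 < β) {g p : ι → ℝ}
    (hp0 : ∀ ℓ, 0 ≤ p ℓ) (hp1 : ∑ ℓ, p ℓ = 1) (hθ : 0 ≤ θ) :
    ∃ μ : ι → ℝ, (∀ ℓ, 0 ≤ μ ℓ) ∧ ∑ ℓ, μ ℓ = 1 ∧ 1 / 2 * ∑ ℓ, |μ ℓ - p ℓ| ≤ θ ∧
      ∀ η, cvarObjective β μ g η ∈ dualValues β θ g p := by
  classical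
  have : Nonempty ι := by
    by_contra hempty
    rw [not_nonempty_iff] at hempty
    simp at hp1
  obtain ⟨top, -, htop⟩ := exists_max_image univ g univ_nonempty
  obtain ⟨x, r, htrim, hrθ, hx, hcase⟩ : ∃ x r, IsLowerTrim g p r x ∧
      ∑ ℓ, r ℓ ≤ θ ∧ x ≤ g top ∧ (∑ ℓ, r ℓ = θ ∨ x = g top) := by
    rcases lt_or_ge θ 1 with hθ1 | hθ1
    · obtain ⟨j, r, htrim, hr⟩ := exists_isLowerTrim g hp0 hθ (hp1 ▸ hθ1.le)
      exact ⟨g j, r, htrim, hr.le, htop j (mem_univ j), Or.inl hr⟩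
    · exact ⟨g top, p, ⟨hp0, fun _ => le_rfl, fun _ _ => rfl,
        fun ℓ hℓ => absurd (htop ℓ (mem_univ ℓ)) hℓ.not_ge⟩, hp1 ▸ hθ1, le_rfl, Or.inr rfl⟩
  obtain ⟨hμ0, hμ1, hμθ⟩ := shiftMass_mem_ball hp1 htrim.nonneg htrim.le hrθ top
  refine ⟨_, hμ0, hμ1, hμθ, fun η => ?_⟩
  set φ : ℝ → ℝ := fun y => max (y - η) 0
  have hφ : Monotone φ := fun y z h => max_le_max (by linarith) le_rfl
  have hvalue : ∑ ℓ, shiftMass p r top ℓ * max (g ℓ - η) 0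
      = (φ (g top) - φ x) * θ + ∑ ℓ, p ℓ * max (max (g ℓ - η) 0) (φ x) :=
    (htrim.comp_monotone hφ).sum_shiftMass_mul_eq top <| by
      rcases hcase with h | rfl
      · rw [h, sub_self, mul_zero]
      · exact mul_eq_zero_of_left (sub_self _) _
  rw [cvarObjective, hvalue]
  exact mem_dualValues hβ hp1 (hφ hx) fun ℓ => hφ (htop ℓ (mem_univ ℓ))

theorem sSup_primalValues_eq_sInf_dualValues {β θ : ℝ} (hβ0 : 0 < β) (hβ1 : β ≤ 1)
    {g p : ι → ℝ} (hp0 : ∀ ℓ, 0 ≤ p ℓ) (hp1 : ∑ ℓ, p ℓ = 1) (hθ : 0 ≤ θ) :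
    sSup (primalValues β θ g p) = sInf (dualValues β θ g p) := by
  obtain ⟨μ, hμ0, hμ1, hμθ, hdual⟩ :=
    exists_forall_cvarObjective_mem_dualValues hβ0 hp0 hp1 hθ
  have hμ : cvar β μ g ∈ primalValues β θ g p := ⟨μ, hμ0, hμ1, hμθ, rfl⟩
  have weak : ∀ {v w}, v ∈ primalValues β θ g p → w ∈ dualValues β θ g p → v ≤ w :=
    le_of_mem_primalValues_of_mem_dualValues hβ0 hβ1
  refine le_antisymm
    (csSup_le ⟨_, hμ⟩ fun v hv => le_csInf ⟨_, hdual 0⟩ fun w hw => weak hv hw) ?_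
  calc sInf (dualValues β θ g p) ≤ cvar β μ g :=
        le_csInf ⟨_, 0, rfl⟩ fun _ ⟨η, hη⟩ =>
          hη ▸ csInf_le ⟨_, fun w hw => weak hμ hw⟩ (hdual η)
    _ ≤ sSup (primalValues β θ g p) := le_csSup ⟨_, fun v hv => weak hv (hdual 0)⟩ hμ

end TVRobustCVaR

theorem stmt_8_general (L : ℕ)
    (β : ℝ) (hβ : β ∈ Set.Ioo (0 : ℝ) 1)
    (g : Fin L → ℝ)
    (phat : Fin L → ℝ) (hphat_nonneg : ∀ ℓ, 0 ≤ phat ℓ) (hphat_sum : ∑ ℓ, phat ℓ = 1)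
    (θ : ℝ) (hθ : 0 ≤ θ) :
    sSup {v : ℝ | ∃ μ : Fin L → ℝ, (∀ ℓ, 0 ≤ μ ℓ) ∧ (∑ ℓ, μ ℓ = 1) ∧
        (1 / 2) * (∑ ℓ, |μ ℓ - phat ℓ|) ≤ θ ∧
        v = sInf {y : ℝ | ∃ η : ℝ, y = η + β⁻¹ * ∑ ℓ, μ ℓ * max (g ℓ - η) 0}}
      = sInf {v : ℝ | ∃ (lam η ν : ℝ) (γ₁ γ₂ : Fin L → ℝ),
          0 ≤ lam ∧ (∀ ℓ, 0 ≤ γ₁ ℓ) ∧ (∀ ℓ, 0 ≤ γ₂ ℓ) ∧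
          (∀ ℓ, max (g ℓ - η) 0 ≤ β * (γ₁ ℓ - γ₂ ℓ + ν)) ∧
          (∀ ℓ, γ₁ ℓ + γ₂ ℓ = lam) ∧
          v = 2 * lam * θ + η + ν + ∑ ℓ, (γ₁ ℓ - γ₂ ℓ) * phat ℓ} :=
  TVRobustCVaR.sSup_primalValues_eq_sInf_dualValues hβ.1 hβ.2.le hphat_nonneg hphat_sum hθ

/-- Tractable reformulation of the distributionally robust CVaR over a total-variation
ambiguity set (Proposition 8). -/
theorem stmt_8 (L : ℕ) (hL : 0 < L)
    (β : ℝ) (hβ : β ∈ Set.Ioo (0 : ℝ) 1)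
    (g : Fin L → ℝ)
    (phat : Fin L → ℝ) (hphat_nonneg : ∀ ℓ, 0 ≤ phat ℓ) (hphat_sum : ∑ ℓ, phat ℓ = 1)
    (θ : ℝ) (hθ : 0 ≤ θ) :
    sSup {v : ℝ | ∃ μ : Fin L → ℝ, (∀ ℓ, 0 ≤ μ ℓ) ∧ (∑ ℓ, μ ℓ = 1) ∧
        (1 / 2) * (∑ ℓ, |μ ℓ - phat ℓ|) ≤ θ ∧
        v = sInf {y : ℝ | ∃ η : ℝ, y = η + β⁻¹ * ∑ ℓ, μ ℓ * max (g ℓ - η) 0}}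
      = sInf {v : ℝ | ∃ (lam η ν : ℝ) (γ₁ γ₂ : Fin L → ℝ),
          0 ≤ lam ∧ (∀ ℓ, 0 ≤ γ₁ ℓ) ∧ (∀ ℓ, 0 ≤ γ₂ ℓ) ∧
          (∀ ℓ, max (g ℓ - η) 0 ≤ β * (γ₁ ℓ - γ₂ ℓ + ν)) ∧
          (∀ ℓ, γ₁ ℓ + γ₂ ℓ = lam) ∧
          v = 2 * lam * θ + η + ν + ∑ ℓ, (γ₁ ℓ - γ₂ ℓ) * phat ℓ} :=
  stmt_8_general L β hβ g phat hphat_nonneg hphat_sum θ hθ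
end

section
/- Let X and U be compact sets, f : X × U → X continuous, x_F ∈ X, and r(x,u) = r_x(x) + r_u(u) where r_x, r_u are continuous, r_x(x_F) = 0, r_x(x) > 0 for x ≠ x_F, r_u(0) = 0, r_u(u) > 0 for u ≠ 0. Suppose Q ⊆ X is such that for each x ∈ Q there exists u_x ∈ U with f(x, u_x) = x_F, the value function on Q is J(x) = r(x, u_x) for a minimizing u_x, i.e., J(x) = min{ r(x,u) : u ∈ U, f(x,u) = x_F } (assumed attained). If (x_k) ⊂ Q with x_k → x_F and u_k ∈ U with f(x_k, u_k) = x_F and J(x_k) = r(x_k, u_k), then J(x_k) → 0. -/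
open Filter

/-- Continuity of the one-step value function at the target: along any sequence in `Q`
converging to `x_F` with one-step optimal inputs, the value converges to `0`. -/
theorem stmt_11 {nx nu : ℕ}
    (X : Set (EuclideanSpace ℝ (Fin nx))) (U : Set (EuclideanSpace ℝ (Fin nu)))
    (hX : IsCompact X) (hU : IsCompact U)
    (f : EuclideanSpace ℝ (Fin nx) → EuclideanSpace ℝ (Fin nu) → EuclideanSpace ℝ (Fin nx))
    (hfc : ContinuousOn (fun p : EuclideanSpace ℝ (Fin nx) × EuclideanSpace ℝ (Fin nu) =>
      f p.1 p.2) (X ×ˢ U))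
    (xF : EuclideanSpace ℝ (Fin nx)) (hxF : xF ∈ X)
    (h0U : (0 : EuclideanSpace ℝ (Fin nu)) ∈ U)
    (rx : EuclideanSpace ℝ (Fin nx) → ℝ) (ru : EuclideanSpace ℝ (Fin nu) → ℝ)
    (hrxc : ContinuousOn rx X) (hruc : ContinuousOn ru U)
    (hrxF : rx xF = 0) (hrxpos : ∀ x ∈ X, x ≠ xF → 0 < rx x)
    (hru0 : ru 0 = 0) (hrupos : ∀ u ∈ U, u ≠ 0 → 0 < ru u)
    (huniq : ∀ u ∈ U, f xF u = xF → u = 0)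
    (Q : Set (EuclideanSpace ℝ (Fin nx))) (hQX : Q ⊆ X)
    (J : EuclideanSpace ℝ (Fin nx) → ℝ)
    (x : ℕ → EuclideanSpace ℝ (Fin nx)) (u : ℕ → EuclideanSpace ℝ (Fin nu))
    (hxQ : ∀ k, x k ∈ Q) (huU : ∀ k, u k ∈ U)
    (hone : ∀ k, f (x k) (u k) = xF)
    (hJmin : ∀ k, J (x k) = rx (x k) + ru (u k))
    (hJopt : ∀ k, ∀ u' ∈ U, f (x k) u' = xF → J (x k) ≤ rx (x k) + ru u')
    (hconv : Tendsto x atTop (nhds xF)) :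
    Tendsto (fun k => J (x k)) atTop (nhds 0) := by
    -- rx (x k) → 0
  have hxX : ∀ k, x k ∈ X := fun k => hQX (hxQ k)
  have hxconvW : Tendsto x atTop (nhdsWithin xF X) :=
    tendsto_nhdsWithin_of_tendsto_nhds_of_eventually_within x hconv
      (Eventually.of_forall hxX)
  have hrx : Tendsto (fun k => rx (x k)) atTop (nhds 0) := by
    have := (hrxc xF hxF).tendsto.comp hxconvW
    rwa [hrxF] at this
  have hru : Tendsto (fun k => ru (u k)) atTop (nhds 0) := by
    apply tendsto_of_subseq_tendsto
    intro ns hns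
    obtain ⟨ub, hubU, ms, hms, hlim⟩ := hU.tendsto_subseq (fun n => huU (ns n))
    -- f (x (ns (ms n))) (u (ns (ms n))) → f xF ub = xF
    have hpt : Tendsto (fun n => ((x (ns (ms n))), (u (ns (ms n)))))
        atTop (nhdsWithin (xF, ub) (X ×ˢ U)) := by
      apply tendsto_nhdsWithin_of_tendsto_nhds_of_eventually_within
      · exact (hconv.comp (hns.comp hms.tendsto_atTop)).prodMk_nhds hlim
      · exact Eventually.of_forall fun n => ⟨hxX _, huU _⟩
    have hfub : f xF ub = xF := by
      have h1 : Tendsto (fun n => f (x (ns (ms n))) (u (ns (ms n)))) atTop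
          (nhds (f xF ub)) := (hfc (xF, ub) ⟨hxF, hubU⟩).tendsto.comp hpt
      have h2 : Tendsto (fun n => f (x (ns (ms n))) (u (ns (ms n)))) atTop (nhds xF) := by
        simpa [hone] using tendsto_const_nhds (x := xF) (f := (atTop : Filter ℕ))
      exact tendsto_nhds_unique h1 h2
    have hub0 : ub = 0 := huniq ub hubU hfub
    refine ⟨ms, ?_⟩
    have huW : Tendsto (fun n => u (ns (ms n))) atTop (nhdsWithin ub U) :=
      tendsto_nhdsWithin_of_tendsto_nhds_of_eventually_within _ hlim
        (Eventually.of_forall fun n => huU _)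
    have := (hruc ub hubU).tendsto.comp huW
    rwa [hub0, hru0] at this
  have : Tendsto (fun k => rx (x k) + ru (u k)) atTop (nhds 0) := by
    simpa using hrx.add hru
  simpa [hJmin] using this
end

section
/- Let X, U be sets, x_F ∈ X, f : X × U → X, and r_x : X → ℝ≥0, r_u : U → ℝ≥0. Fix x ∈ X and u_x ∈ U with f(x, u_x) = x_F. Suppose there exist constants C₁, C₂, C₃ ≥ 0 and α₁, α₂, α₃ ≥ 0 such that: (i) ‖f(x,u₁) − f(x,u₂)‖ ≥ C₁‖u₁ − u₂‖^{α₁} for all u₁, u₂ ∈ U; (ii) |r_u(u₁) − r_u(u₂)| ≤ C₂‖u₁ − u₂‖^{α₂} for all u₁, u₂ ∈ U; (iii) r_x(y) ≥ C₃‖y − x_F‖^{α₃} for all y ∈ X; and (iv) C₃C₁^{α₃}‖u − u_x‖^{α₁α₃} ≥ C₂‖u − u_x‖^{α₂} for all u ∈ U. Then r_x(f(x,u)) + r_u(u) ≥ r_u(u_x) for all u ∈ U. -/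
/-- Core chain of inequalities in Proposition 6: the one-step input to the target is
cost-optimal. -/
theorem stmt_13 {nx nu : ℕ}
    (X : Set (EuclideanSpace ℝ (Fin nx))) (U : Set (EuclideanSpace ℝ (Fin nu)))
    (xF : EuclideanSpace ℝ (Fin nx))
    (f : EuclideanSpace ℝ (Fin nx) → EuclideanSpace ℝ (Fin nu) → EuclideanSpace ℝ (Fin nx))
    (rx : EuclideanSpace ℝ (Fin nx) → ℝ) (ru : EuclideanSpace ℝ (Fin nu) → ℝ)
    (hrx_nonneg : ∀ y, 0 ≤ rx y) (hru_nonneg : ∀ u, 0 ≤ ru u)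
    (x : EuclideanSpace ℝ (Fin nx)) (hx : x ∈ X)
    (ux : EuclideanSpace ℝ (Fin nu)) (hux : ux ∈ U) (honestep : f x ux = xF)
    (C₁ C₂ C₃ α₁ α₂ α₃ : ℝ)
    (hC₁ : 0 ≤ C₁) (hC₂ : 0 ≤ C₂) (hC₃ : 0 ≤ C₃)
    (hα₁ : 0 ≤ α₁) (hα₂ : 0 ≤ α₂) (hα₃ : 0 ≤ α₃)
    (h1 : ∀ u₁ ∈ U, ∀ u₂ ∈ U, C₁ * ‖u₁ - u₂‖ ^ α₁ ≤ ‖f x u₁ - f x u₂‖)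
    (h2 : ∀ u₁ ∈ U, ∀ u₂ ∈ U, |ru u₁ - ru u₂| ≤ C₂ * ‖u₁ - u₂‖ ^ α₂)
    (h3 : ∀ y ∈ X, C₃ * ‖y - xF‖ ^ α₃ ≤ rx y)
    (hfX : ∀ u ∈ U, f x u ∈ X)
    (h4 : ∀ u ∈ U, C₂ * ‖u - ux‖ ^ α₂ ≤ C₃ * C₁ ^ α₃ * ‖u - ux‖ ^ (α₁ * α₃)) :
    ∀ u ∈ U, ru ux ≤ rx (f x u) + ru u := by
  intro u hu
  have step1 : ru ux - ru u ≤ C₂ * ‖u - ux‖ ^ α₂ := by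
    have := h2 ux hux u hu
    rw [show ux - u = -(u - ux) by abel, norm_neg] at this
    calc ru ux - ru u ≤ |ru ux - ru u| := le_abs_self _
      _ ≤ C₂ * ‖u - ux‖ ^ α₂ := this
  have step2 : C₃ * C₁ ^ α₃ * ‖u - ux‖ ^ (α₁ * α₃)
      = C₃ * (C₁ * ‖u - ux‖ ^ α₁) ^ α₃ := by
    rw [Real.mul_rpow hC₁ (Real.rpow_nonneg (norm_nonneg _) _),
      ← Real.rpow_mul (norm_nonneg _)]
    ring
  have step3 : C₃ * (C₁ * ‖u - ux‖ ^ α₁) ^ α₃ ≤ C₃ * ‖f x u - xF‖ ^ α₃ := by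
    apply mul_le_mul_of_nonneg_left _ hC₃
    apply Real.rpow_le_rpow (mul_nonneg hC₁ (Real.rpow_nonneg (norm_nonneg _) _)) _ hα₃
    have := h1 u hu ux hux
    rwa [honestep] at this
  have step4 : C₃ * ‖f x u - xF‖ ^ α₃ ≤ rx (f x u) := h3 _ (hfX u hu)
  have := h4 u hu
  linarith [step2 ▸ this]
end
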